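/- arXiv:math/9907170 — 6 statements merged into one kernel-verified Lean document; each statement's English description precedes it below -/
import Mathlib

section
/- The element r = c₁ N∧M + c₂ A₊∧A₋ in h₆∧h₆ has Schouten bracket [[r,r]] = −c₂² A₊∧A₋∧M; in particular r satisfies the classical Yang–Baxter equation [[r,r]]=0 if and only if c₂ = 0. -/
open Polynomial TensorProduct

noncomputable section

/-- The endomorphism algebra of `ℂ[α]`, a model for (the enveloping algebra of)
the two-photon algebra via the Fock–Bargmann realization. -/
abbrev EndP := Module.End ℂ (Polynomial ℂ)

instance : Ring (EndP ⊗[ℂ] EndP) := inferInstance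
instance : Algebra ℂ (EndP ⊗[ℂ] EndP) := inferInstance

/-- `A₋ = d/dα`. -/
def Dop : EndP := derivative

/-- `A₊ = α·`. -/
def Xop : EndP := LinearMap.mulLeft ℂ (X : Polynomial ℂ)

/-- `N = α d/dα`. -/
def Nop : EndP := Xop * Dop

/-- `M = 1`. -/
def Mop : EndP := 1

/-- The triple tensor product where the Schouten bracket lives. -/
abbrev T3 := EndP ⊗[ℂ] (EndP ⊗[ℂ] EndP)

instance : Ring T3 := inferInstance

/-- `x ⊗ y ⊗ z`. -/
def t3 (x y z : EndP) : T3 := x ⊗ₜ[ℂ] (y ⊗ₜ[ℂ] z)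

/-- `x∧y` placed in factors 1,2. -/
def w12 (x y : EndP) : T3 := t3 x y 1 - t3 y x 1

/-- `x∧y` placed in factors 1,3. -/
def w13 (x y : EndP) : T3 := t3 x 1 y - t3 y 1 x

/-- `x∧y` placed in factors 2,3. -/
def w23 (x y : EndP) : T3 := t3 1 x y - t3 1 y x

/-- The fully antisymmetrized tensor `x∧y∧z`. -/
def wedge3 (x y z : EndP) : T3 :=
  t3 x y z - t3 x z y - t3 y x z + t3 y z x + t3 z x y - t3 z y x


lemma dx : Dop * Xop = Xop * Dop + 1 := by
  apply LinearMap.ext; intro p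
  simp [Dop, Xop, Module.End.mul_apply, derivative_mul]; ring

lemma dx' (w : EndP) : Dop * (Xop * w) = Xop * (Dop * w) + w := by
  rw [← mul_assoc, dx, add_mul, one_mul, mul_assoc]

lemma t3_mul (x y z a b c : EndP) : t3 x y z * t3 a b c = t3 (x*a) (y*b) (z*c) := by
  simp [t3, Algebra.TensorProduct.tmul_mul_tmul]

lemma t3_add1 (a b y z : EndP) : t3 (a+b) y z = t3 a y z + t3 b y z := by
  simp [t3, add_tmul]
lemma t3_add2 (x a b z : EndP) : t3 x (a+b) z = t3 x a z + t3 x b z := by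
  simp [t3, add_tmul, tmul_add]
lemma t3_add3 (x y a b : EndP) : t3 x y (a+b) = t3 x y a + t3 x y b := by
  simp [t3, tmul_add]


/-- Evaluation functional `f ↦ coeff n (f p)`. -/
def phiF (n : ℕ) (p : Polynomial ℂ) : EndP →ₗ[ℂ] ℂ :=
  (lcoeff ℂ n).comp (LinearMap.applyₗ p)

def Lfun : T3 →ₗ[ℂ] ℂ :=
  TensorProduct.lift ((phiF 1 1).smulRight
    (TensorProduct.lift ((phiF 0 X).smulRight (phiF 0 1))))

lemma L_t3 (x y z : EndP) :
    Lfun (t3 x y z) = phiF 1 1 x * (phiF 0 X y * phiF 0 1 z) := by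
  simp [Lfun, t3, TensorProduct.lift.tmul, LinearMap.smulRight_apply, smul_eq_mul, mul_assoc]

lemma L_wedge : Lfun (wedge3 Xop Dop Mop) = 1 := by
  simp [wedge3, L_t3, phiF, Xop, Dop, Mop, LinearMap.applyₗ_apply_apply, lcoeff_apply,
    coeff_one, coeff_X]

set_option synthInstance.maxHeartbeats 1000000 in
set_option maxHeartbeats 4000000 in
/-- For `r = c₁ N∧M + c₂ A₊∧A₋`, the Schouten bracket is
`[[r,r]] = −c₂² A₊∧A₋∧M`; in particular `r` solves the classical Yang–Baxter
equation `[[r,r]] = 0` iff `c₂ = 0`. -/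
theorem schouten_bracket_type_I (c₁ c₂ : ℂ) :
    let r₁₂ : T3 := c₁ • w12 Nop Mop + c₂ • w12 Xop Dop
    let r₁₃ : T3 := c₁ • w13 Nop Mop + c₂ • w13 Xop Dop
    let r₂₃ : T3 := c₁ • w23 Nop Mop + c₂ • w23 Xop Dop
    ⁅r₁₂, r₁₃⁆ + ⁅r₁₂, r₂₃⁆ + ⁅r₁₃, r₂₃⁆ = (-(c₂ ^ 2)) • wedge3 Xop Dop Mop ∧
    (⁅r₁₂, r₁₃⁆ + ⁅r₁₂, r₂₃⁆ + ⁅r₁₃, r₂₃⁆ = 0 ↔ c₂ = 0) := by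
  intro r₁₂ r₁₃ r₂₃
  have key : ⁅r₁₂, r₁₃⁆ + ⁅r₁₂, r₂₃⁆ + ⁅r₁₃, r₂₃⁆ = (-(c₂ ^ 2)) • wedge3 Xop Dop Mop := by
    unfold r₁₂ r₁₃ r₂₃
    simp only [Ring.lie_def, w12, w13, w23, wedge3, Nop, Mop, smul_add, smul_sub,
      sub_mul, mul_sub, add_mul, mul_add, smul_mul_assoc, mul_smul_comm, t3_mul,
      one_mul, mul_one, smul_smul, mul_assoc]
    simp only [dx', dx, mul_add, add_mul, mul_one, one_mul, t3_add1, t3_add2, t3_add3,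
      smul_add, mul_assoc]
    module
  refine ⟨key, ?_⟩
  rw [key]
  constructor
  · intro h
    have h2 := congrArg Lfun h
    rw [map_smul, L_wedge, map_zero, smul_eq_mul, mul_one, neg_eq_zero] at h2
    exact pow_eq_zero_iff two_ne_zero |>.mp h2
  · intro h
    simp [h]

end
end

section
/- The element r = a₁ N∧A₊ in h₆⊗h₆ is a skew-symmetric solution of the classical Yang–Baxter equation: [r₁₂,r₁₃] + [r₁₂,r₂₃] + [r₁₃,r₂₃] = 0. -/
/-!
In `A ⊗ A ⊗ A` two legs of the form `a ⊗ b ⊗ 1` and `c ⊗ 1 ⊗ d` commute except in the factor they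
share, so `⁅a ⊗ b ⊗ 1, c ⊗ 1 ⊗ d⁆ = ⁅a, c⁆ ⊗ b ⊗ d`, and similarly for the other pairs of legs.
Expanding, the Yang–Baxter expression of `X ∧ Y` collapses to the full antisymmetrization of
`⁅X, Y⁆ ⊗ X ⊗ Y`, which vanishes as soon as `⁅X, Y⁆` lies in the span of `X` and `Y`;
for `X = N`, `Y = A₊` this is `⁅N, A₊⁆ = A₊`.
-/

open TensorProduct

section

attribute [local instance] LieRing.ofAssociativeRing

variable {R A : Type*} [CommRing R] [Ring A] [Algebra R A]

local notation "⟪" x ", " y ", " z "⟫" => (x ⊗ₜ[R] (y ⊗ₜ[R] z) : A ⊗[R] (A ⊗[R] A))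

theorem lie_tmul_tmul_one_tmul_one_tmul (a b c d : A) :
    ⁅⟪a, b, 1⟫, ⟪c, 1, d⟫⁆ = ⟪⁅a, c⁆, b, d⟫ := by
  simp only [Ring.lie_def, Algebra.TensorProduct.tmul_mul_tmul, mul_one, one_mul, ← sub_tmul]

theorem lie_tmul_tmul_one_one_tmul_tmul (a b c d : A) :
    ⁅⟪a, b, 1⟫, ⟪1, c, d⟫⁆ = ⟪a, ⁅b, c⁆, d⟫ := by
  simp only [Ring.lie_def, Algebra.TensorProduct.tmul_mul_tmul, mul_one, one_mul, ← sub_tmul,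
    ← tmul_sub]

theorem lie_tmul_one_tmul_one_tmul_tmul (a b c d : A) :
    ⁅⟪a, 1, b⟫, ⟪1, c, d⟫⁆ = ⟪a, c, ⁅b, d⁆⟫ := by
  simp only [Ring.lie_def, Algebra.TensorProduct.tmul_mul_tmul, mul_one, one_mul, ← tmul_sub]

variable (R) in
def wedge₃ (x y z : A) : A ⊗[R] (A ⊗[R] A) :=
  ⟪x, y, z⟫ - ⟪x, z, y⟫ + ⟪y, z, x⟫ - ⟪y, x, z⟫ + ⟪z, x, y⟫ - ⟪z, y, x⟫

theorem wedge₃_eq_zero_of_mem_span {x y z : A} (hz : z ∈ Submodule.span R {x, y}) :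
    wedge₃ R z x y = 0 := by
  obtain ⟨α, β, rfl⟩ := Submodule.mem_span_pair.mp hz
  simp only [wedge₃, add_tmul, tmul_add, ← smul_tmul', tmul_smul]
  module

theorem cybe_wedge_eq_wedge₃ (X Y : A) :
    ⁅⟪X, Y, 1⟫ - ⟪Y, X, 1⟫, ⟪X, 1, Y⟫ - ⟪Y, 1, X⟫⁆ + ⁅⟪X, Y, 1⟫ - ⟪Y, X, 1⟫, ⟪1, X, Y⟫ - ⟪1, Y, X⟫⁆
      + ⁅⟪X, 1, Y⟫ - ⟪Y, 1, X⟫, ⟪1, X, Y⟫ - ⟪1, Y, X⟫⁆ = wedge₃ R ⁅X, Y⁆ X Y := by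
  simp only [lie_sub, sub_lie, lie_tmul_tmul_one_tmul_one_tmul, lie_tmul_tmul_one_one_tmul_tmul,
    lie_tmul_one_tmul_one_tmul_tmul, lie_self, ← lie_skew X Y, zero_tmul, tmul_zero, neg_tmul,
    tmul_neg, wedge₃]
  abel

theorem cybe_smul_wedge_eq_zero_of_lie_mem_span (c : R) {X Y : A}
    (h : ⁅X, Y⁆ ∈ Submodule.span R {X, Y}) :
    ⁅c • (⟪X, Y, 1⟫ - ⟪Y, X, 1⟫), c • (⟪X, 1, Y⟫ - ⟪Y, 1, X⟫)⁆
      + ⁅c • (⟪X, Y, 1⟫ - ⟪Y, X, 1⟫), c • (⟪1, X, Y⟫ - ⟪1, Y, X⟫)⁆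
      + ⁅c • (⟪X, 1, Y⟫ - ⟪Y, 1, X⟫), c • (⟪1, X, Y⟫ - ⟪1, Y, X⟫)⁆ = 0 := by
  -- Unpinned, `smul_lie` does not unify with this bracket at reducible transparency.
  simp only [smul_lie (L := A ⊗[R] (A ⊗[R] A)), lie_smul, ← smul_add, cybe_wedge_eq_wedge₃,
    wedge₃_eq_zero_of_mem_span h, smul_zero]

end

/-- `r = a₁ N∧A₊` is a skew-symmetric solution of the classical Yang–Baxter
equation. Here the identity is proved universally: in any associative algebra
(e.g. the universal enveloping algebra of the two-photon algebra `h₆`)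
containing elements `N, A₊` with `[N, A₊] = A₊`, the Schouten bracket of
`r = a₁ (N⊗A₊ − A₊⊗N)` vanishes in the triple tensor product. -/
theorem r_N_wedge_Ap_solves_CYBE (A : Type*) [Ring A] [Algebra ℝ A]
    (a₁ : ℝ) (N Ap : A) (h : ⁅N, Ap⁆ = Ap) :
    let t : A → A → A → (A ⊗[ℝ] (A ⊗[ℝ] A)) := fun x y z => x ⊗ₜ[ℝ] (y ⊗ₜ[ℝ] z)
    let r₁₂ := a₁ • (t N Ap 1 - t Ap N 1)
    let r₁₃ := a₁ • (t N 1 Ap - t Ap 1 N)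
    let r₂₃ := a₁ • (t 1 N Ap - t 1 Ap N)
    ⁅r₁₂, r₁₃⁆ + ⁅r₁₂, r₂₃⁆ + ⁅r₁₃, r₂₃⁆ = 0 :=
  cybe_smul_wedge_eq_zero_of_lie_mem_span a₁ (by rw [h]; exact Submodule.subset_span (by simp))
end

section
/- Let r = a₁ N∧A₊ and define δ(X) = [1⊗X + X⊗1, r] for X ∈ h₆. Then δ(A₊)=0, δ(M)=0, δ(N) = a₁ N∧A₊, δ(B₊) = −2a₁ B₊∧A₊, δ(A₋) = a₁(A₋∧A₊ + N∧M), and δ(B₋) = 2a₁(B₋∧A₊ + N∧A₋). -/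
open TensorProduct

lemma delta_tmul (A : Type*) [Ring A] [Algebra ℝ A] (X n a : A) :
    ⁅(1 : A) ⊗ₜ[ℝ] X + X ⊗ₜ[ℝ] (1 : A), n ⊗ₜ[ℝ] a⁆
      = n ⊗ₜ[ℝ] ⁅X, a⁆ + ⁅X, n⁆ ⊗ₜ[ℝ] a := by
  simp only [Ring.lie_def, add_mul, mul_add, Algebra.TensorProduct.tmul_mul_tmul,
    one_mul, mul_one]
  rw [TensorProduct.tmul_sub, TensorProduct.sub_tmul]
  abel

lemma delta_w (A : Type*) [Ring A] [Algebra ℝ A] (c : ℝ) (X n a : A) :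
    ⁅(1 : A) ⊗ₜ[ℝ] X + X ⊗ₜ[ℝ] (1 : A), c • (n ⊗ₜ[ℝ] a - a ⊗ₜ[ℝ] n)⁆
      = c • (n ⊗ₜ[ℝ] ⁅X, a⁆ + ⁅X, n⁆ ⊗ₜ[ℝ] a
             - (a ⊗ₜ[ℝ] ⁅X, n⁆ + ⁅X, a⁆ ⊗ₜ[ℝ] n)) := by
  have hs : ∀ x y : A ⊗[ℝ] A, ⁅x, c • y⁆ = c • ⁅x, y⁆ := fun x y => by
    simp [Ring.lie_def, mul_smul_comm, smul_mul_assoc, smul_sub]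
  have hsub : ∀ x y z : A ⊗[ℝ] A, ⁅x, y - z⁆ = ⁅x, y⁆ - ⁅x, z⁆ := fun x y z => by
    simp only [Ring.lie_def, mul_sub, sub_mul]; abel
  rw [hs, hsub, delta_tmul, delta_tmul]

/-- For `r = a₁ N∧A₊`, the coboundary cocommutator `δ(X) = [1⊗X + X⊗1, r]`
takes the values `δ(A₊) = 0`, `δ(M) = 0`, `δ(N) = a₁ N∧A₊`,
`δ(B₊) = −2a₁ B₊∧A₊`, `δ(A₋) = a₁(A₋∧A₊ + N∧M)`,
`δ(B₋) = 2a₁(B₋∧A₊ + N∧A₋)`.  The computation is carried out universally in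
`A ⊗ A` for any associative algebra `A` containing elements satisfying the
two-photon commutation relations (e.g. `U(h₆)`). -/
theorem cocommutator_nonstandard_typeII (A : Type*) [Ring A] [Algebra ℝ A]
    (a₁ : ℝ) (N Ap Am Bp Bm M : A)
    (h1 : ⁅N, Ap⁆ = Ap) (h2 : ⁅N, Am⁆ = -Am) (h3 : ⁅Am, Ap⁆ = M)
    (h4 : ⁅N, Bp⁆ = 2 • Bp) (h5 : ⁅N, Bm⁆ = -(2 • Bm))
    (h6 : ⁅Bm, Bp⁆ = 4 • N + 2 • M)
    (h7 : ⁅Ap, Bm⁆ = -(2 • Am)) (h8 : ⁅Ap, Bp⁆ = 0)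
    (h9 : ⁅Am, Bp⁆ = 2 • Ap) (h10 : ⁅Am, Bm⁆ = 0)
    (hM1 : ⁅M, N⁆ = 0) (hM2 : ⁅M, Ap⁆ = 0) (hM3 : ⁅M, Am⁆ = 0)
    (hM4 : ⁅M, Bp⁆ = 0) (hM5 : ⁅M, Bm⁆ = 0) :
    let w : A → A → A ⊗[ℝ] A := fun x y => x ⊗ₜ[ℝ] y - y ⊗ₜ[ℝ] x
    let r : A ⊗[ℝ] A := a₁ • w N Ap
    let δ : A → A ⊗[ℝ] A := fun X => ⁅(1 : A) ⊗ₜ[ℝ] X + X ⊗ₜ[ℝ] (1 : A), r⁆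
    δ Ap = 0 ∧ δ M = 0 ∧
    δ N = a₁ • w N Ap ∧
    δ Bp = -((2 * a₁) • w Bp Ap) ∧
    δ Am = a₁ • (w Am Ap + w N M) ∧
    δ Bm = (2 * a₁) • (w Bm Ap + w N Am) := by
  intro w r δ
  have hAN : ⁅Ap, N⁆ = -Ap := by rw [Ring.lie_def] at h1 ⊢; rw [← neg_sub, h1]
  have hMN : ⁅M, N⁆ = 0 := hM1
  have hAmN : ⁅Am, N⁆ = Am := by rw [Ring.lie_def] at h2 ⊢; rw [← neg_sub, h2, neg_neg]
  have hAmAp : ⁅Am, Ap⁆ = M := h3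
  have hBpN : ⁅Bp, N⁆ = -(2 • Bp) := by rw [Ring.lie_def] at h4 ⊢; rw [← neg_sub, h4]
  have hBmN : ⁅Bm, N⁆ = 2 • Bm := by rw [Ring.lie_def] at h5 ⊢; rw [← neg_sub, h5, neg_neg]
  have hBpAp : ⁅Bp, Ap⁆ = 0 := by rw [Ring.lie_def] at h8 ⊢; rw [← neg_sub, h8, neg_zero]
  have hBmAp : ⁅Bm, Ap⁆ = 2 • Am := by rw [Ring.lie_def] at h7 ⊢; rw [← neg_sub, h7, neg_neg]
  have hself : ∀ x : A, ⁅x, x⁆ = 0 := fun x => by rw [Ring.lie_def, sub_self]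
  refine ⟨?_, ?_, ?_, ?_, ?_, ?_⟩ <;>
    simp only [δ, r, w, delta_w, hself, hAN, hMN, hAmN, hAmAp, hBpN, hBmN,
      hBpAp, hBmAp, hM2, h1, TensorProduct.tmul_neg, TensorProduct.neg_tmul,
      TensorProduct.tmul_smul, TensorProduct.smul_tmul', TensorProduct.tmul_zero,
      TensorProduct.zero_tmul, two_smul, two_nsmul, TensorProduct.add_tmul,
      TensorProduct.tmul_add] <;>
    module
end

section
/- Let r = a₂ N∧B₊ and define δ(X) = [1⊗X + X⊗1, r] for X ∈ h₆. Then δ(B₊)=0, δ(M)=0, δ(N) = 2a₂ N∧B₊, δ(A₊) = −a₂ A₊∧B₊, δ(A₋) = a₂(A₋∧B₊ + 2N∧A₊), and δ(B₋) = 2a₂(B₋∧B₊ + N∧M). -/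
open TensorProduct

lemma keylem {A : Type*} [Ring A] [Algebra ℝ A] (X a b : A) :
    ⁅(1:A) ⊗ₜ[ℝ] X + X ⊗ₜ[ℝ] (1:A), a ⊗ₜ[ℝ] b⁆
      = a ⊗ₜ[ℝ] ⁅X, b⁆ + ⁅X, a⁆ ⊗ₜ[ℝ] b := by
  simp only [Ring.lie_def, add_mul, mul_add, Algebra.TensorProduct.tmul_mul_tmul,
    one_mul, mul_one, TensorProduct.tmul_sub, TensorProduct.sub_tmul]
  abel

lemma liesmul {B : Type*} [Ring B] [Algebra ℝ B] (c : ℝ) (x y : B) :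
    ⁅x, c • y⁆ = c • ⁅x, y⁆ := by
  simp only [Ring.lie_def, mul_smul_comm, smul_mul_assoc, smul_sub]

/-- For `r = a₂ N∧B₊`, the coboundary cocommutator `δ(X) = [1⊗X + X⊗1, r]`
takes the values `δ(B₊) = 0`, `δ(M) = 0`, `δ(N) = 2a₂ N∧B₊`,
`δ(A₊) = −a₂ A₊∧B₊`, `δ(A₋) = a₂(A₋∧B₊ + 2N∧A₊)`,
`δ(B₋) = 2a₂(B₋∧B₊ + N∧M)`.  The computation is carried out universally in
`A ⊗ A` for any associative algebra `A` containing elements satisfying the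
two-photon commutation relations (e.g. `U(h₆)`). -/
theorem cocommutator_nonstandard_typeIII (A : Type*) [Ring A] [Algebra ℝ A]
    (a₂ : ℝ) (N Ap Am Bp Bm M : A)
    (h1 : ⁅N, Ap⁆ = Ap) (h2 : ⁅N, Am⁆ = -Am) (h3 : ⁅Am, Ap⁆ = M)
    (h4 : ⁅N, Bp⁆ = 2 • Bp) (h5 : ⁅N, Bm⁆ = -(2 • Bm))
    (h6 : ⁅Bm, Bp⁆ = 4 • N + 2 • M)
    (h7 : ⁅Ap, Bm⁆ = -(2 • Am)) (h8 : ⁅Ap, Bp⁆ = 0)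
    (h9 : ⁅Am, Bp⁆ = 2 • Ap) (h10 : ⁅Am, Bm⁆ = 0)
    (hM1 : ⁅M, N⁆ = 0) (hM2 : ⁅M, Ap⁆ = 0) (hM3 : ⁅M, Am⁆ = 0)
    (hM4 : ⁅M, Bp⁆ = 0) (hM5 : ⁅M, Bm⁆ = 0) :
    let w : A → A → A ⊗[ℝ] A := fun x y => x ⊗ₜ[ℝ] y - y ⊗ₜ[ℝ] x
    let r : A ⊗[ℝ] A := a₂ • w N Bp
    let δ : A → A ⊗[ℝ] A := fun X => ⁅(1 : A) ⊗ₜ[ℝ] X + X ⊗ₜ[ℝ] (1 : A), r⁆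
    δ Bp = 0 ∧ δ M = 0 ∧
    δ N = (2 * a₂) • w N Bp ∧
    δ Ap = -(a₂ • w Ap Bp) ∧
    δ Am = a₂ • (w Am Bp + 2 • w N Ap) ∧
    δ Bm = (2 * a₂) • (w Bm Bp + w N M) := by
  intro w r δ
  letI : LieRing A := LieRing.ofAssociativeRing
  letI : LieRing (A ⊗[ℝ] A) := LieRing.ofAssociativeRing
  have hBpN : ⁅Bp, N⁆ = -(2 • Bp) := by rw [← lie_skew (x := Bp) (y := N), h4]
  have hApN : ⁅Ap, N⁆ = -Ap := by rw [← lie_skew (x := Ap) (y := N), h1]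
  have hAmN : ⁅Am, N⁆ = Am := by rw [← lie_skew (x := Am) (y := N), h2]; simp
  have hBmN : ⁅Bm, N⁆ = 2 • Bm := by rw [← lie_skew (x := Bm) (y := N), h5]; simp
  have hNM : ⁅N, M⁆ = 0 := by rw [← lie_skew (x := N) (y := M), hM1]; simp
  have hBpBm : ⁅Bp, Bm⁆ = -(4 • N + 2 • M) := by rw [← lie_skew (x := Bp) (y := Bm), h6]
  have hBpAp : ⁅Bp, Ap⁆ = 0 := by rw [← lie_skew (x := Bp) (y := Ap), h8]; simp
  have hBpAm : ⁅Bp, Am⁆ = -(2 • Ap) := by rw [← lie_skew (x := Bp) (y := Am), h9]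
  have hBpM : ⁅Bp, M⁆ = 0 := by rw [← lie_skew (x := Bp) (y := M), hM4]; simp
  refine ⟨?_, ?_, ?_, ?_, ?_, ?_⟩ <;>
  · simp only [δ, r, w, liesmul, lie_sub, keylem,
      h1, h2, h3, h4, h5, h6, h7, h8, h9, h10, hM1, hM2, hM3, hM4, hM5,
      hBpN, hApN, hAmN, hBmN, hNM, hBpBm, hBpAp, hBpAm, hBpM, lie_self]
    simp only [TensorProduct.tmul_smul, ← TensorProduct.smul_tmul',
      TensorProduct.tmul_neg, TensorProduct.neg_tmul, TensorProduct.tmul_add,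
      TensorProduct.add_tmul, TensorProduct.tmul_zero, TensorProduct.zero_tmul,
      TensorProduct.tmul_sub, TensorProduct.sub_tmul, smul_sub, smul_add, smul_neg,
      smul_smul, smul_zero, ← Nat.cast_smul_eq_nsmul ℝ]
    module
end

section
/- In the quantum two-photon algebra U_λ(h₆) with relations [N,A₊] = (e^{λA₊}−1)/λ (and A₊ commuting with itself), the coproduct values Δ(A₊) = 1⊗A₊ + A₊⊗1 and Δ(N) = 1⊗N + N⊗e^{λA₊} satisfy the same relation: [Δ(N), Δ(A₊)] = (e^{λΔ(A₊)}−1)/λ. -/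
open TensorProduct

/-! Expanding the bracket bilinearly, the cross terms `⁅1 ⊗ N, A₊ ⊗ 1⁆` and `⁅N ⊗ E, 1 ⊗ A₊⁆`
vanish, and the other two give `1 ⊗ ⁅N, A₊⁆ + ⁅N, A₊⁆ ⊗ E`; with `⁅N, A₊⁆ = (E - 1)/λ` the
`1 ⊗ E` terms cancel, leaving `(E ⊗ E - 1 ⊗ 1)/λ`. -/

namespace Algebra.TensorProduct

-- For `add_lie` and `lie_add`; kept local since the theorem's bracket is `Ring.instBracket`.
attribute [local instance] LieRing.ofAssociativeRing

variable {R A B : Type*} [CommSemiring R] [Ring A] [Ring B] [Algebra R A] [Algebra R B]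

theorem lie_tmul_tmul_of_commute_left {a c : A} (h : Commute a c) (b d : B) :
    ⁅a ⊗ₜ[R] b, c ⊗ₜ[R] d⁆ = (a * c) ⊗ₜ ⁅b, d⁆ := by
  simp only [Ring.lie_def, tmul_mul_tmul, h.eq, tmul_sub]

theorem lie_tmul_tmul_of_commute_right (a c : A) {b d : B} (h : Commute b d) :
    ⁅a ⊗ₜ[R] b, c ⊗ₜ[R] d⁆ = ⁅a, c⁆ ⊗ₜ (b * d) := by
  simp only [Ring.lie_def, tmul_mul_tmul, h.eq, sub_tmul]

theorem lie_one_tmul_add_tmul_one_tmul_add_tmul_one {N Ap E : A} (hE : Commute Ap E) :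
    ⁅(1 : A) ⊗ₜ[R] N + N ⊗ₜ[R] E, (1 : A) ⊗ₜ[R] Ap + Ap ⊗ₜ[R] (1 : A)⁆
      = 1 ⊗ₜ ⁅N, Ap⁆ + ⁅N, Ap⁆ ⊗ₜ E := by
  have h₁ : ⁅(1 : A) ⊗ₜ[R] N, (1 : A) ⊗ₜ[R] Ap⁆ = 1 ⊗ₜ ⁅N, Ap⁆ := by
    rw [lie_tmul_tmul_of_commute_left (Commute.one_left 1), one_mul]
  have h₂ : ⁅(1 : A) ⊗ₜ[R] N, Ap ⊗ₜ[R] (1 : A)⁆ = 0 := by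
    rw [lie_tmul_tmul_of_commute_right _ _ (Commute.one_right N), (Commute.one_left Ap).lie_eq,
      zero_tmul]
  have h₃ : ⁅N ⊗ₜ[R] E, (1 : A) ⊗ₜ[R] Ap⁆ = 0 := by
    rw [lie_tmul_tmul_of_commute_left (Commute.one_right N), hE.symm.lie_eq, tmul_zero]
  have h₄ : ⁅N ⊗ₜ[R] E, Ap ⊗ₜ[R] (1 : A)⁆ = ⁅N, Ap⁆ ⊗ₜ E := by
    rw [lie_tmul_tmul_of_commute_right _ _ (Commute.one_right E), mul_one]
  rw [add_lie, lie_add, lie_add, h₁, h₂, h₃, h₄, add_zero, zero_add]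

end Algebra.TensorProduct

-- `E` stands for `e^{λA₊}`, so that `e^{λΔ(A₊)} = E ⊗ E`.
/-- In `U_λ(h₆)`, with `E = e^{λA₊}` (so that `E` commutes with `A₊`) and the
defining relation `[N,A₊] = (e^{λA₊}−1)/λ`, the coproducts
`Δ(A₊) = 1⊗A₊ + A₊⊗1` and `Δ(N) = 1⊗N + N⊗e^{λA₊}` satisfy the same relation:
`[Δ(N), Δ(A₊)] = (e^{λΔ(A₊)}−1)/λ`, where
`e^{λΔ(A₊)} = e^{λA₊}⊗e^{λA₊}` since `A₊⊗1` and `1⊗A₊` commute. -/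
theorem coproduct_preserves_NAp_relation
    (A : Type*) [Ring A] [Algebra ℂ A] (lam : ℂ) (N Ap E : A)
    (hE : Commute Ap E)
    (hrel : ⁅N, Ap⁆ = lam⁻¹ • (E - 1)) :
    ⁅(1 : A) ⊗ₜ[ℂ] N + N ⊗ₜ[ℂ] E, (1 : A) ⊗ₜ[ℂ] Ap + Ap ⊗ₜ[ℂ] (1 : A)⁆
      = lam⁻¹ • (E ⊗ₜ[ℂ] E - (1 : A) ⊗ₜ[ℂ] (1 : A)) := by
  rw [Algebra.TensorProduct.lie_one_tmul_add_tmul_one_tmul_add_tmul_one hE, hrel, tmul_smul,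
    ← smul_tmul', ← smul_add, tmul_sub, sub_tmul]
  congr 1
  abel
end

section
/- In the quantum two-photon algebra U_λ(h₆) of type III, the coproducts Δ(B₊) = 1⊗B₊ + B₊⊗1, Δ(N) = 1⊗N + N⊗e^{2λB₊}, Δ(M) = 1⊗M + M⊗1, Δ(B₋) = 1⊗B₋ + B₋⊗e^{2λB₊} + 2λN⊗e^{2λB₊}M satisfy [Δ(B₋), Δ(B₊)] = 4Δ(N) + 2Δ(M)e^{2λΔ(B₊)}, given the relations [N,B₊] = (e^{2λB₊}−1)/λ, [B₋,B₊] = 4N + 2M e^{2λB₊}, M central. -/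
open TensorProduct

/-- In the type III quantum two-photon algebra `U_λ(h₆)`, with
`E = e^{2λB₊}` (so that `E` commutes with `B₊`), `M` central, and relations
`[N,B₊] = (e^{2λB₊}−1)/λ`, `[B₋,B₊] = 4N + 2M e^{2λB₊}`, the coproducts
`Δ(B₊) = 1⊗B₊ + B₊⊗1`, `Δ(N) = 1⊗N + N⊗e^{2λB₊}`, `Δ(M) = 1⊗M + M⊗1`,
`Δ(B₋) = 1⊗B₋ + B₋⊗e^{2λB₊} + 2λ N⊗e^{2λB₊}M` satisfy
`[Δ(B₋), Δ(B₊)] = 4Δ(N) + 2Δ(M) e^{2λΔ(B₊)}`, where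
`e^{2λΔ(B₊)} = e^{2λB₊}⊗e^{2λB₊}`. -/
theorem coproduct_preserves_BmBp_relation
    (A : Type*) [Ring A] [Algebra ℂ A] (lam : ℂ) (hlam : lam ≠ 0)
    (N Bp Bm M E : A)
    (hE : Commute Bp E)
    (hM : ∀ x : A, Commute M x)
    (hNBp : ⁅N, Bp⁆ = lam⁻¹ • (E - 1))
    (hBmBp : ⁅Bm, Bp⁆ = 4 • N + 2 • (M * E)) :
    let ΔN := (1 : A) ⊗ₜ[ℂ] N + N ⊗ₜ[ℂ] E
    let ΔM := (1 : A) ⊗ₜ[ℂ] M + M ⊗ₜ[ℂ] (1 : A)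
    let ΔBp := (1 : A) ⊗ₜ[ℂ] Bp + Bp ⊗ₜ[ℂ] (1 : A)
    let ΔBm := (1 : A) ⊗ₜ[ℂ] Bm + Bm ⊗ₜ[ℂ] E + (2 * lam) • (N ⊗ₜ[ℂ] (E * M))
    ⁅ΔBm, ΔBp⁆ = 4 • ΔN + 2 • (ΔM * (E ⊗ₜ[ℂ] E)) := by
  intro ΔN ΔM ΔBp ΔBm
  have hBm : Bm * Bp = Bp * Bm + (4 • N + 2 • (M * E)) := by
    rw [Ring.lie_def, sub_eq_iff_eq_add] at hBmBp; rw [hBmBp]; abel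
  have hN : N * Bp = Bp * N + lam⁻¹ • (E - 1) := by
    rw [Ring.lie_def, sub_eq_iff_eq_add] at hNBp; rw [hNBp]; abel
  have hEM : Commute Bp (E * M) := hE.mul_right (hM Bp).symm
  have hME : M * E = E * M := (hM E).eq
  simp only [ΔN, ΔM, ΔBp, ΔBm, Ring.lie_def, mul_add, add_mul, smul_mul_assoc,
    mul_smul_comm, Algebra.TensorProduct.tmul_mul_tmul, one_mul, mul_one]
  rw [hBm, hN, hE.eq, hEM.eq, hME]
  simp only [add_tmul, tmul_add, smul_tmul', tmul_smul, smul_smul, smul_sub, sub_tmul,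
    smul_add]
  rw [show (2 * lam) * lam⁻¹ = (2 : ℂ) by field_simp]
  simp only [← Nat.cast_smul_eq_nsmul ℂ, Nat.cast_ofNat, smul_tmul', smul_smul]
  module
end
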